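/- Let Γ be a graph admitting a vertex-transitive group of automorphisms and admitting an automorphism g that fixes exactly one vertex v and acts semiregularly on the other vertices with g of odd order. Then Γ is not bipartite. -/

import Mathlib

open MulAction

theorem aux_dvd_card {X : Type*} [Fintype X] (σ : Equiv.Perm X) (d : ℕ)
    (hd1 : 0 < d) (hσ : σ ^ d = 1)
    (hfree : ∀ x : X, ∀ n : ℕ, 0 < n → n < d → (σ ^ n) x ≠ x) :
    d ∣ Fintype.card X := by
  classical
  rcases isEmpty_or_nonempty X with h | h
  · simp [Fintype.card_eq_zero]
  · obtain ⟨x0⟩ := h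
    have hord : orderOf σ = d := by
      have h1 : orderOf σ ∣ d := orderOf_dvd_of_pow_eq_one hσ
      have h2 : 0 < orderOf σ := orderOf_pos σ
      rcases lt_or_eq_of_le (Nat.le_of_dvd hd1 h1) with hlt | heq
      · exact absurd (by rw [pow_orderOf_eq_one]; rfl) (hfree x0 _ h2 hlt)
      · exact heq
    subst hord
    set d := orderOf σ with hd
    have hstab : ∀ x : X, stabilizer (Subgroup.zpowers σ) x = ⊥ := by
      intro x
      rw [Subgroup.eq_bot_iff_forall]
      rintro ⟨s, k, hk⟩ hs
      have hk' : σ ^ k = s := hk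
      have hsx : σ ^ k • x = x := by rw [hk']; exact hs
      have hnn : (0:ℤ) ≤ k % (d : ℤ) :=
        Int.emod_nonneg k (by exact_mod_cast hd1.ne')
      have hcast : ((k % (d : ℤ)).toNat : ℤ) = k % (d : ℤ) := Int.toNat_of_nonneg hnn
      have hmod : σ ^ (((k % (d : ℤ)).toNat : ℕ)) • x = x := by
        rw [← zpow_natCast, hcast, hd, zpow_mod_orderOf]
        exact hsx
      have hlt : ((k % (d : ℤ)).toNat) < d := by
        have := Int.emod_lt_of_pos k (by exact_mod_cast hd1 : (0:ℤ) < (d:ℤ))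
        omega
      have hzero : ((k % (d : ℤ)).toNat) = 0 := by
        by_contra hne
        exact hfree x _ (Nat.pos_of_ne_zero hne) hlt hmod
      have hone : σ ^ k = 1 := by
        rw [← zpow_mod_orderOf, ← hd, ← hcast, zpow_natCast, hzero, pow_zero]
      exact Subtype.ext (hk'.symm.trans hone)
    have key := MulAction.card_eq_sum_card_group_div_card_stabilizer
      (Subgroup.zpowers σ) X
    have hcardH : Fintype.card (Subgroup.zpowers σ) = d := by
      rw [← Nat.card_eq_fintype_card, Nat.card_zpowers]
    have hterm : ∀ ω : Quotient (orbitRel (Subgroup.zpowers σ) X),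
        Fintype.card (Subgroup.zpowers σ) /
          Fintype.card (stabilizer (Subgroup.zpowers σ) (Quotient.out ω)) = d := by
      intro ω
      have h1 : Fintype.card (stabilizer (Subgroup.zpowers σ) (Quotient.out ω)) = 1 := by
        rw [← Nat.card_eq_fintype_card, hstab, Subgroup.card_bot]
      rw [h1, hcardH, Nat.div_one]
    rw [Finset.sum_congr rfl (fun ω _ => hterm ω), Finset.sum_const, smul_eq_mul] at key
    rw [key]
    exact dvd_mul_left d _

lemma fin2_eq_of_iff {a b c : Fin 2} (h : c = a ↔ c = b) : a = b := by
  fin_cases a <;> fin_cases b <;> fin_cases c <;> simp_all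

lemma fin2_eq_of_ne {a b c : Fin 2} (h1 : a ≠ c) (h2 : b ≠ c) : a = b := by
  fin_cases a <;> fin_cases b <;> fin_cases c <;> simp_all

lemma walk_parity {V : Type*} {Γ : SimpleGraph V} (C : Γ.Coloring (Fin 2)) :
    ∀ {x y : V} (p : Γ.Walk x y), (C x = C y ↔ Even p.length) := by
  intro x y p
  induction p with
  | nil => simp
  | @cons a b c hab p ih =>
    have hne : C a ≠ C b := C.valid hab
    simp only [SimpleGraph.Walk.length_cons, Nat.even_add_one]
    constructor
    · intro hac hev
      exact hne (hac.trans (ih.mpr hev).symm)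
    · intro hnev
      have hbc : C b ≠ C c := fun h => hnev (ih.mp h)
      exact fin2_eq_of_ne hne (fun h => hbc h.symm)

/-- A finite connected vertex-transitive graph with an edge admitting a
quasi-semiregular automorphism of odd order (> 1) is not bipartite. -/
theorem not_bipartite_of_quasi_semiregular_odd_order
    (V : Type*) [Fintype V] (Γ : SimpleGraph V)
    (hconn : Γ.Connected) (hedge : ∃ u w : V, Γ.Adj u w)
    (htrans : ∀ u w : V, ∃ e : Equiv.Perm V,
      (∀ a b : V, Γ.Adj (e a) (e b) ↔ Γ.Adj a b) ∧ e u = w)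
    (g : Equiv.Perm V) (hgaut : ∀ a b : V, Γ.Adj (g a) (g b) ↔ Γ.Adj a b)
    (v : V) (hv : g v = v) (huniq : ∀ w : V, g w = w → w = v)
    (hfree : ∀ w : V, w ≠ v → ∀ n : ℕ, 0 < n → n < orderOf g → (g ^ n) w ≠ w)
    (hodd : Odd (orderOf g)) (hg1 : 1 < orderOf g) :
    ¬ Γ.Colorable 2 := by
  classical
  intro hcol
  obtain ⟨C⟩ := hcol
  set d := orderOf g with hd
  -- parity invariance under automorphisms
  have hpar : ∀ (e : Equiv.Perm V), (∀ a b : V, Γ.Adj (e a) (e b) ↔ Γ.Adj a b) →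
      ∀ x y : V, (C (e x) = C (e y) ↔ C x = C y) := by
    intro e he x y
    obtain ⟨p⟩ := hconn.preconnected x y
    let f : Γ →g Γ := ⟨(e : V → V), fun {a b} h => (he a b).mpr h⟩
    have h1 := walk_parity C (p.map f)
    have h2 := walk_parity C p
    rw [SimpleGraph.Walk.length_map] at h1
    exact h1.trans h2.symm
  -- g preserves colors
  have gc : ∀ x : V, C (g x) = C x := by
    intro x
    have h := hpar g hgaut v x
    rw [hv] at h
    exact fin2_eq_of_iff h
  -- induced permutation on the non-fixed vertices
  have hgv : ∀ x : V, x ≠ v ↔ g x ≠ v := by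
    intro x
    constructor
    · intro hx hc; exact hx (g.injective (hc.trans hv.symm))
    · intro hx hc; exact hx (by rw [hc, hv])
  let σ1 : Equiv.Perm {x : V // x ≠ v} := g.subtypePerm (fun x => (hgv x).symm)
  have hσ1pow : σ1 ^ d = 1 := by
    ext x
    simp [σ1, Equiv.Perm.subtypePerm_pow, hd, pow_orderOf_eq_one]
  have hσ1free : ∀ x : {x : V // x ≠ v}, ∀ n : ℕ, 0 < n → n < d → (σ1 ^ n) x ≠ x := by
    intro x n hn hnd hEq
    apply hfree x.1 x.2 n hn hnd
    rw [Equiv.Perm.subtypePerm_pow] at hEq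
    exact congrArg Subtype.val hEq
  have d1 : d ∣ Fintype.card {x : V // x ≠ v} :=
    aux_dvd_card σ1 d (by omega) hσ1pow hσ1free
  -- induced permutation on the color class not containing v
  have hgc : ∀ x : V, C x ≠ C v ↔ C (g x) ≠ C v := by
    intro x; rw [gc]
  let σ2 : Equiv.Perm {x : V // C x ≠ C v} := g.subtypePerm (fun x => (hgc x).symm)
  have hσ2pow : σ2 ^ d = 1 := by
    ext x
    simp [σ2, Equiv.Perm.subtypePerm_pow, hd, pow_orderOf_eq_one]
  have hσ2free : ∀ x : {x : V // C x ≠ C v}, ∀ n : ℕ, 0 < n → n < d → (σ2 ^ n) x ≠ x := by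
    intro x n hn hnd hEq
    have hxv : x.1 ≠ v := fun h => x.2 (by rw [h])
    apply hfree x.1 hxv n hn hnd
    rw [Equiv.Perm.subtypePerm_pow] at hEq
    exact congrArg Subtype.val hEq
  have d2 : d ∣ Fintype.card {x : V // C x ≠ C v} :=
    aux_dvd_card σ2 d (by omega) hσ2pow hσ2free
  -- cardinalities
  have c1 : Fintype.card {x : V // ¬ (x = v)} = Fintype.card V - Fintype.card {x : V // x = v} :=
    Fintype.card_subtype_compl _
  have c1' : Fintype.card {x : V // x = v} = 1 := Fintype.card_subtype_eq v
  -- the two color classes have equal size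
  obtain ⟨u, w, huw⟩ := hedge
  have hCuw : C u ≠ C w := C.valid huw
  obtain ⟨w0, hw0⟩ : ∃ w0 : V, C w0 ≠ C v := by
    by_cases h : C u = C v
    · exact ⟨w, fun hc => hCuw (h.trans hc.symm)⟩
    · exact ⟨u, h⟩
  obtain ⟨e, he, hev⟩ := htrans v w0
  have hparv : ∀ x : V, C (e x) = C w0 ↔ C x = C v := by
    intro x; rw [← hev]; exact hpar e he x v
  let E : {x : V // C x = C v} ≃ {x : V // C x ≠ C v} :=
    { toFun := fun x => ⟨e x.1, by
        rw [(hparv x.1).mpr x.2]; exact hw0⟩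
      invFun := fun y => ⟨e.symm y.1, (hparv _).mp (by
        rw [Equiv.apply_symm_apply]; exact fin2_eq_of_ne y.2 hw0)⟩
      left_inv := fun x => Subtype.ext (e.symm_apply_apply x.1)
      right_inv := fun y => Subtype.ext (e.apply_symm_apply y.1) }
  have csame : Fintype.card {x : V // C x = C v} = Fintype.card {x : V // C x ≠ C v} :=
    Fintype.card_congr E
  have c2 : Fintype.card {x : V // ¬ (C x = C v)} =
      Fintype.card V - Fintype.card {x : V // C x = C v} :=
    Fintype.card_subtype_compl _
  have hle : Fintype.card {x : V // C x = C v} ≤ Fintype.card V := Fintype.card_subtype_le _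
  have hNpos : 0 < Fintype.card V := Fintype.card_pos_iff.mpr ⟨v⟩
  -- final arithmetic
  set N := Fintype.card V
  set b := Fintype.card {x : V // C x ≠ C v}
  have hbN : N = 2 * b := by
    have : Fintype.card {x : V // ¬ (C x = C v)} = b := rfl
    omega
  have hd2b : d ∣ 2 * b := Dvd.dvd.mul_left d2 2
  have hcne : Fintype.card {x : V // x ≠ v} = N - 1 := by
    have h0 : Fintype.card {x : V // ¬ (x = v)} = Fintype.card {x : V // x ≠ v} := rfl
    omega
  have hdN1 : d ∣ N - 1 := hcne ▸ d1
  have hdvd1 : d ∣ 1 := by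
    have h := Nat.dvd_sub (hbN ▸ hd2b) hdN1
    rwa [Nat.sub_sub_self (by omega)] at h
  have := Nat.le_of_dvd one_pos hdvd1
  omega
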